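/- arXiv:2302.09114 — 3 statements merged into one kernel-verified Lean document; each statement's English description precedes it below -/
import Mathlib

section
/- For α ∈ (0,∞), α ≠ 1, the second derivative of the margin-based α-loss is l^{α''}(z) = e^z(α e^z - α + 1) / (α (e^{-z}+1)^{-1/α} (e^z+1)^3). -/
/-! Since `σ' = σ (1 - σ)`, the loss satisfies `l' = -σ ^ q (1 - σ)` with `q = 1 - 1/α`, and
one more product rule gives `l'' = σ ^ q (1 - σ) (σ - q (1 - σ))`. The closed form follows by
substituting `σ = eᶻ / (eᶻ + 1)`, `1 - σ = 1 / (eᶻ + 1)` and `σ ^ (1/α) = (e⁻ᶻ + 1) ^ (-1/α)`. -/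

noncomputable def sigmoid (z : ℝ) : ℝ := 1 / (1 + Real.exp (-z))

noncomputable def alphaLoss (α z : ℝ) : ℝ :=
  (α / (α - 1)) * (1 - sigmoid z ^ (1 - 1 / α))

theorem sigmoid_eq_real_sigmoid : sigmoid = Real.sigmoid := by
  funext z
  rw [sigmoid, Real.sigmoid_def, one_div]

theorem hasDerivAt_sigmoid (z : ℝ) : HasDerivAt sigmoid (sigmoid z * (1 - sigmoid z)) z := by
  rw [sigmoid_eq_real_sigmoid]
  exact Real.hasDerivAt_sigmoid z

theorem sigmoid_pos (z : ℝ) : 0 < sigmoid z := by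
  rw [sigmoid_eq_real_sigmoid]
  exact Real.sigmoid_pos z

theorem hasDerivAt_sigmoid_rpow (q z : ℝ) :
    HasDerivAt (fun w => sigmoid w ^ q) (q * sigmoid z ^ q * (1 - sigmoid z)) z := by
  have hσ := (sigmoid_pos z).ne'
  convert (hasDerivAt_sigmoid z).rpow_const (p := q) (Or.inl hσ) using 1
  rw [Real.rpow_sub_one hσ]
  field_simp

theorem hasDerivAt_sigmoid_rpow_mul_one_sub (q z : ℝ) :
    HasDerivAt (fun w => sigmoid w ^ q * (1 - sigmoid w))
      (sigmoid z ^ q * (1 - sigmoid z) * (q * (1 - sigmoid z) - sigmoid z)) z :=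
  ((hasDerivAt_sigmoid_rpow q z).mul ((hasDerivAt_sigmoid z).const_sub 1)).congr_deriv (by ring)

theorem hasDerivAt_alphaLoss {α : ℝ} (hα : α ≠ 0) (hα1 : α ≠ 1) (z : ℝ) :
    HasDerivAt (alphaLoss α) (-(sigmoid z ^ (1 - 1 / α) * (1 - sigmoid z))) z := by
  have : α - 1 ≠ 0 := sub_ne_zero.mpr hα1
  refine (((hasDerivAt_sigmoid_rpow (1 - 1 / α) z).const_sub 1).const_mul
    (α / (α - 1))).congr_deriv ?_
  field_simp

theorem deriv_deriv_alphaLoss {α : ℝ} (hα : α ≠ 0) (hα1 : α ≠ 1) (z : ℝ) :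
    deriv (deriv (alphaLoss α)) z =
      sigmoid z ^ (1 - 1 / α) * (1 - sigmoid z) *
        (sigmoid z - (1 - 1 / α) * (1 - sigmoid z)) := by
  have hderiv : deriv (alphaLoss α) =
      fun w => -(sigmoid w ^ (1 - 1 / α) * (1 - sigmoid w)) :=
    funext fun w => (hasDerivAt_alphaLoss hα hα1 w).deriv
  rw [hderiv, deriv.fun_neg, (hasDerivAt_sigmoid_rpow_mul_one_sub _ z).deriv]
  ring

theorem sigmoid_eq_exp_div (z : ℝ) : sigmoid z = Real.exp z / (Real.exp z + 1) := by
  rw [sigmoid, Real.exp_neg]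
  field_simp

theorem one_sub_sigmoid_eq_one_div (z : ℝ) : 1 - sigmoid z = 1 / (Real.exp z + 1) := by
  rw [sigmoid_eq_exp_div]
  field_simp
  ring

theorem exp_neg_add_one_rpow_neg (z p : ℝ) :
    (Real.exp (-z) + 1) ^ (-p) = sigmoid z ^ p := by
  rw [sigmoid, one_div, Real.inv_rpow (by positivity), Real.rpow_neg (by positivity),
    add_comm]

theorem alphaLoss_second_deriv (α : ℝ) (hα : 0 < α) (hα1 : α ≠ 1) (z : ℝ) :
    deriv (deriv (fun w => alphaLoss α w)) z =
      Real.exp z * (α * Real.exp z - α + 1) /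
        (α * (Real.exp (-z) + 1) ^ (-(1 / α)) * (Real.exp z + 1) ^ 3) := by
  rw [deriv_deriv_alphaLoss hα.ne' hα1, exp_neg_add_one_rpow_neg, Real.rpow_sub (sigmoid_pos z),
    Real.rpow_one, one_sub_sigmoid_eq_one_div, sigmoid_eq_exp_div]
  have : 0 < (Real.exp z / (Real.exp z + 1)) ^ (1 / α) := by positivity
  field_simp
  ring
end

section
/- For |z| > log 2, the third derivative magnitudes satisfy |l^{∞'''}(z)| ≤ |l^{1'''}(z)|, i.e., |(-e^{3z} + 4e^{2z} - e^z)/(e^z+1)^4| ≤ |(e^z - e^{2z})/(e^z+1)^3|. -/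
theorem third_deriv_bound (z : ℝ) (hz : |z| > Real.log 2) :
    |(-Real.exp (3 * z) + 4 * Real.exp (2 * z) - Real.exp z) /
        (Real.exp z + 1) ^ 4| ≤
      |(Real.exp z - Real.exp (2 * z)) / (Real.exp z + 1) ^ 3| := by
  set t := Real.exp z with ht
  have ht0 : 0 < t := Real.exp_pos z
  have h2 : Real.exp (2 * z) = t ^ 2 := by
    rw [two_mul, Real.exp_add]; ring
  have h3 : Real.exp (3 * z) = t ^ 3 := by
    have h : (3 : ℝ) * z = z + z + z := by ring
    rw [h, Real.exp_add, Real.exp_add]; ring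
  have hcase : t > 2 ∨ t < 1 / 2 := by
    rcases lt_abs.mp hz with h | h
    · left
      have := Real.exp_lt_exp.mpr h
      rwa [Real.exp_log (by norm_num : (0:ℝ) < 2)] at this
    · right
      have hz' : z < -Real.log 2 := by linarith
      have := Real.exp_lt_exp.mpr hz'
      rw [Real.exp_neg, Real.exp_log (by norm_num : (0:ℝ) < 2)] at this; linarith
  have key : |(-t ^ 3 + 4 * t ^ 2 - t)| ≤ |t - t ^ 2| * (t + 1) := by
    rcases hcase with h | h
    · have habs : |t - t ^ 2| = t ^ 2 - t := by
        rw [abs_of_nonpos (by nlinarith)]; ring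
      rw [habs, abs_le]
      constructor <;> nlinarith
    · have habs : |t - t ^ 2| = t - t ^ 2 := by
        rw [abs_of_nonneg (by nlinarith)]
      rw [habs, abs_le]
      constructor <;> nlinarith
  rw [h2, h3, abs_div, abs_div, abs_of_pos (show (0:ℝ) < (t+1)^4 by positivity),
    abs_of_pos (show (0:ℝ) < (t+1)^3 by positivity),
    div_le_div_iff₀ (by positivity) (by positivity)]
  calc |(-t ^ 3 + 4 * t ^ 2 - t)| * (t + 1) ^ 3
      ≤ (|t - t ^ 2| * (t + 1)) * (t + 1) ^ 3 :=
        mul_le_mul_of_nonneg_right key (by positivity)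
    _ = |t - t ^ 2| * (t + 1) ^ 4 := by ring
end

section
/- The equation |l^{1'''}(z)| = |l^{∞'''}(z)| (as in the given formulas) holds exactly at z = ± log 2. -/
theorem third_deriv_eq_iff (z : ℝ) :
    |(Real.exp z - Real.exp (2 * z)) / (Real.exp z + 1) ^ 3| =
      |(-Real.exp (3 * z) + 4 * Real.exp (2 * z) - Real.exp z) /
        (Real.exp z + 1) ^ 4| ↔
    z = Real.log 2 ∨ z = -Real.log 2 := by
  have ht : 0 < Real.exp z := Real.exp_pos z
  have h2 : Real.exp (2 * z) = Real.exp z ^ 2 := by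
    rw [two_mul, Real.exp_add, sq]
  have h3 : Real.exp (3 * z) = Real.exp z ^ 3 := by
    rw [show (3:ℝ) * z = z + z + z by ring, Real.exp_add, Real.exp_add]; ring
  rw [h2, h3]
  set t := Real.exp z with htdef
  have hz2 : z = Real.log 2 ↔ t = 2 := by
    constructor
    · intro h; rw [htdef, h, Real.exp_log (by norm_num)]
    · intro h; rw [← Real.log_exp z, ← htdef, h]
  have hz3 : z = -Real.log 2 ↔ t = 1/2 := by
    constructor
    · intro h
      rw [htdef, h, Real.exp_neg, Real.exp_log (by norm_num)]
      norm_num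
    · intro h
      rw [← Real.log_exp z, ← htdef, h, ← Real.log_inv]
      norm_num
  rw [hz2, hz3]
  have hp : (0:ℝ) < t + 1 := by linarith
  rw [abs_div, abs_div, abs_pow, abs_pow, abs_of_pos hp,
    div_eq_div_iff (pow_pos hp 3).ne' (pow_pos hp 4).ne']
  have key : |t - t^2| * (t+1)^4 = |(t - t^2) * (t+1)| * (t+1)^3 := by
    rw [abs_mul, abs_of_pos hp]; ring
  rw [key]
  constructor
  · intro h
    have h' : |(t - t^2) * (t+1)| = |-t^3 + 4*t^2 - t| :=
      mul_right_cancel₀ (by positivity) h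
    rcases abs_eq_abs.mp h' with h1 | h1
    · right
      have h0 : t * (4*t - 2) = 0 := by linear_combination -h1
      rcases mul_eq_zero.mp h0 with h | h
      · linarith
      · linarith
    · left
      have h0 : t^2 * (2*t - 4) = 0 := by linear_combination -h1
      rcases mul_eq_zero.mp h0 with h | h
      · nlinarith
      · linarith
  · rintro (h | h) <;> rw [h] <;> norm_num
end
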